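/- Let ε > 0, let W ∈ ℝ^{r×r} be diagonal with W₁₁ ≥ W₂₂ ≥ ⋯ ≥ W_{rr} > 0, let X ∈ ℝ^{m×n} with m ≥ r, n ≥ r have rank s with s ≤ r, and let X = U·Σ_X·Vᵀ be a reduced singular value decomposition, where U ∈ ℝ^{m×s} and V ∈ ℝ^{n×s} have orthonormal columns and Σ_X = diag(σ₁, …, σ_s) with σ₁ ≥ ⋯ ≥ σ_s > 0. Let W_X = diag(W₁₁, …, W_{ss}), and define Ã = [U·Σ_X^{1/2}·W_X^{1/2} , 0] ∈ ℝ^{m×r} and B̃ = [V·Σ_X^{1/2}·W_X^{-1/2} , 0] ∈ ℝ^{n×r} (padding with zero columns). Then Ã·B̃ᵀ = X and (1/2)(‖Ã·W^{-1}‖_L^{1} + ‖B̃‖_L^{1}) = Σ_{i=1}^{r} log((σ_i / W_{ii})^{1/2} + ε), where σ_i = 0 for i > s. -/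

import Mathlib

open Matrix

/-- The singular values of a real `m × n` matrix, indexed by the columns:
the square roots of the eigenvalues of `Aᵀ * A`. -/
noncomputable def singularValues {m n : ℕ} (A : Matrix (Fin m) (Fin n) ℝ) : Fin n → ℝ :=
  fun i => Real.sqrt ((Matrix.isHermitian_conjTranspose_mul_self A).eigenvalues i)

/-- The logarithmic norm `‖A‖_L^p = ∑ᵢ log(σᵢ(A)^p + ε)`
(here `min(m,n) = n`, the number of columns). -/
noncomputable def logNorm (ε p : ℝ) {m n : ℕ} (A : Matrix (Fin m) (Fin n) ℝ) : ℝ :=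
  ∑ j, Real.log ((singularValues A j) ^ p + ε)

/-- Pad a matrix with zero columns on the right. -/
def padCols {m s r : ℕ} (h : s ≤ r) (M : Matrix (Fin m) (Fin s) ℝ) :
    Matrix (Fin m) (Fin r) ℝ :=
  Matrix.of fun i j => if hj : (j : ℕ) < s then M i ⟨j, hj⟩ else 0

/-!
Up to zero columns, both `Ã W⁻¹` and `B̃` are a matrix with orthonormal columns times a
diagonal matrix, so their Gram matrices are diagonal with entries `σᵢ / Wᵢᵢ` (and `0` past `s`).
Since the eigenvalues of a Hermitian matrix are, as a multiset, the roots of its characteristic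
polynomial, both logarithmic norms equal `∑ᵢ log ((σᵢ / Wᵢᵢ)^{1/2} + ε)`. The factorisation
`Ã B̃ᵀ = X` is the cancellation `W_X^{1/2} W_X^{-1/2} = 1`, the zero columns contributing nothing.
-/

theorem Matrix.transpose_mul_self_mul_diagonal {R n k : Type*} [CommSemiring R] [Fintype n]
    [Fintype k] [DecidableEq k] {A : Matrix n k R} {d : k → R} (hA : Aᵀ * A = diagonal d)
    (e : k → R) :
    (A * diagonal e)ᵀ * (A * diagonal e) = diagonal fun j => e j * d j * e j := by
  rw [transpose_mul, diagonal_transpose, Matrix.mul_assoc, ← Matrix.mul_assoc Aᵀ, hA,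
    diagonal_mul_diagonal, diagonal_mul_diagonal]
  simp only [mul_assoc]

theorem Matrix.inv_diagonal_of_ne_zero {K n : Type*} [Field K] [Fintype n] [DecidableEq n]
    {v : n → K} (hv : ∀ i, v i ≠ 0) : (diagonal v)⁻¹ = diagonal fun i => (v i)⁻¹ :=
  inv_eq_left_inv <| by
    rw [diagonal_mul_diagonal, ← diagonal_one]
    exact congrArg diagonal (funext fun i => inv_mul_cancel₀ (hv i))

theorem Matrix.IsHermitian.univ_map_eigenvalues_of_eq_diagonal {𝕜 n : Type*} [RCLike 𝕜]
    [Fintype n] [DecidableEq n] {A : Matrix n n 𝕜} (hA : A.IsHermitian) {d : n → ℝ}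
    (hd : A = diagonal fun i => (d i : 𝕜)) :
    Finset.univ.val.map hA.eigenvalues = Finset.univ.val.map d := by
  have h := hA.roots_charpoly_eq_eigenvalues
  subst hd
  rw [charpoly_diagonal, Polynomial.roots_prod _ _
      (by simp [Finset.prod_ne_zero_iff, Polynomial.X_sub_C_ne_zero])] at h
  simp only [Polynomial.roots_X_sub_C, Multiset.bind_singleton, ← Multiset.map_map] at h
  refine (Multiset.map_injective (RCLike.ofReal_injective (K := 𝕜)) ?_).symm
  rw [Multiset.map_map]
  exact h

theorem Matrix.IsHermitian.sum_comp_eigenvalues_of_eq_diagonal {𝕜 n M : Type*} [RCLike 𝕜]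
    [Fintype n] [DecidableEq n] [AddCommMonoid M] {A : Matrix n n 𝕜} (hA : A.IsHermitian)
    {d : n → ℝ} (hd : A = diagonal fun i => (d i : 𝕜)) (f : ℝ → M) :
    ∑ i, f (hA.eigenvalues i) = ∑ i, f (d i) := by
  simpa [Multiset.map_map] using
    congrArg (fun s => (s.map f).sum) (hA.univ_map_eigenvalues_of_eq_diagonal hd)

def padVec {α : Type*} [Zero α] {s : ℕ} (r : ℕ) (v : Fin s → α) : Fin r → α :=
  fun j => if hj : (j : ℕ) < s then v ⟨j, hj⟩ else 0

section padding

variable {s r : ℕ}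

theorem padVec_div_castLE {α : Type*} [GroupWithZero α] (h : s ≤ r) (v : Fin s → α)
    (w : Fin r → α) :
    padVec r (fun k => v k / w (Fin.castLE h k)) = fun j => padVec r v j / w j := by
  ext j
  by_cases hj : (j : ℕ) < s
  · simp only [padVec, dif_pos hj]
    rfl
  · simp [padVec, hj]

variable {m n : ℕ}

theorem padCols_mul_transpose_padCols (h : s ≤ r)
    (M : Matrix (Fin m) (Fin s) ℝ) (N : Matrix (Fin n) (Fin s) ℝ) :
    padCols h M * (padCols h N)ᵀ = M * Nᵀ := by
  obtain ⟨k, rfl⟩ := Nat.exists_eq_add_of_le h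
  ext i j
  simp [mul_apply, Fin.sum_univ_add, padCols]

theorem transpose_padCols_mul_padCols (h : s ≤ r)
    {M : Matrix (Fin m) (Fin s) ℝ} {d : Fin s → ℝ} (hM : Mᵀ * M = diagonal d) :
    (padCols h M)ᵀ * padCols h M = diagonal (padVec r d) := by
  ext j k
  have hMjk := fun hj hk => congr_fun₂ hM ⟨j, hj⟩ ⟨k, hk⟩
  by_cases hj : (j : ℕ) < s <;> by_cases hk : (k : ℕ) < s
  · simp_all [mul_apply, padCols, padVec, diagonal_apply, Fin.ext_iff]
  · simp [mul_apply, padCols, padVec, diagonal_apply, Fin.ext_iff, hj, hk]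
    omega
  all_goals simp [mul_apply, padCols, padVec, diagonal_apply, hj, hk]

theorem padCols_mul_diagonal (h : s ≤ r) (M : Matrix (Fin m) (Fin s) ℝ) (v : Fin r → ℝ) :
    padCols h M * diagonal v = padCols h (M * diagonal fun k => v (Fin.castLE h k)) := by
  ext i j
  by_cases hj : (j : ℕ) < s
  · simp only [padCols, mul_diagonal, of_apply, dif_pos hj]
    rfl
  · simp [padCols, hj]

end padding

theorem logNorm_eq_of_transpose_mul_self_eq_diagonal (ε p : ℝ) {m n : ℕ}
    {A : Matrix (Fin m) (Fin n) ℝ} {d : Fin n → ℝ} (hA : Aᵀ * A = diagonal d) :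
    logNorm ε p A = ∑ j, Real.log (Real.sqrt (d j) ^ p + ε) :=
  (isHermitian_conjTranspose_mul_self A).sum_comp_eigenvalues_of_eq_diagonal hA
    fun x => Real.log (Real.sqrt x ^ p + ε)

theorem logNorm_padCols_mul_diagonal (ε p : ℝ) {m s r : ℕ} (h : s ≤ r)
    {P : Matrix (Fin m) (Fin s) ℝ} (hP : Pᵀ * P = 1) (c : Fin s → ℝ) :
    logNorm ε p (padCols h (P * diagonal c)) =
      ∑ j, Real.log (Real.sqrt (padVec r (fun k => c k * c k) j) ^ p + ε) := by
  rw [← diagonal_one] at hP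
  refine logNorm_eq_of_transpose_mul_self_eq_diagonal ε p
    (transpose_padCols_mul_padCols h ((transpose_mul_self_mul_diagonal hP c).trans ?_))
  simp only [mul_one]

theorem stmt14_general {m n r s : ℕ} (ε : ℝ)
    (w : Fin r → ℝ) (hw_pos : ∀ i, 0 < w i)
    (X : Matrix (Fin m) (Fin n) ℝ) (hsr : s ≤ r)
    (U : Matrix (Fin m) (Fin s) ℝ) (V : Matrix (Fin n) (Fin s) ℝ)
    (hU : Uᵀ * U = 1) (hV : Vᵀ * V = 1)
    (σ : Fin s → ℝ) (hσ_pos : ∀ i, 0 < σ i)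
    (hX : X = U * Matrix.diagonal σ * Vᵀ) :
    (padCols hsr (U * Matrix.diagonal
        (fun k => Real.sqrt (σ k) * Real.sqrt (w (Fin.castLE hsr k)))) *
      (padCols hsr (V * Matrix.diagonal
        (fun k => Real.sqrt (σ k) * (Real.sqrt (w (Fin.castLE hsr k)))⁻¹)))ᵀ = X) ∧
    (1/2) * (logNorm ε 1 (padCols hsr (U * Matrix.diagonal
        (fun k => Real.sqrt (σ k) * Real.sqrt (w (Fin.castLE hsr k)))) *
          (Matrix.diagonal w)⁻¹) +
      logNorm ε 1 (padCols hsr (V * Matrix.diagonal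
        (fun k => Real.sqrt (σ k) * (Real.sqrt (w (Fin.castLE hsr k)))⁻¹)))) =
      ∑ i : Fin r, Real.log
        (((if h : (i : ℕ) < s then σ ⟨i, h⟩ else 0) / w i) ^ ((1 : ℝ)/2) + ε) := by
  set a : Fin s → ℝ := fun k => Real.sqrt (σ k) * Real.sqrt (w (Fin.castLE hsr k))
  set b : Fin s → ℝ := fun k => Real.sqrt (σ k) * (Real.sqrt (w (Fin.castLE hsr k)))⁻¹
  have hσ : ∀ k, Real.sqrt (σ k) * Real.sqrt (σ k) = σ k :=
    fun k => Real.mul_self_sqrt (hσ_pos k).le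
  have hw : ∀ k, Real.sqrt (w k) * Real.sqrt (w k) = w k :=
    fun k => Real.mul_self_sqrt (hw_pos k).le
  have hab : (fun k => a k * b k) = σ := by
    ext k
    rw [mul_mul_mul_comm, hσ, mul_inv_cancel₀ (Real.sqrt_pos.mpr (hw_pos _)).ne', mul_one]
  have haw : (fun k => a k * (w (Fin.castLE hsr k))⁻¹ * (a k * (w (Fin.castLE hsr k))⁻¹)) =
      fun k => σ k / w (Fin.castLE hsr k) := by
    ext k
    rw [mul_mul_mul_comm, mul_mul_mul_comm (Real.sqrt _), hσ, hw, mul_assoc,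
      mul_inv_cancel_left₀ (hw_pos _).ne', div_eq_mul_inv]
  have hbb : (fun k => b k * b k) = fun k => σ k / w (Fin.castLE hsr k) := by
    ext k
    rw [mul_mul_mul_comm, hσ, ← mul_inv, hw, div_eq_mul_inv]
  refine ⟨?_, ?_⟩
  · rw [padCols_mul_transpose_padCols, transpose_mul, diagonal_transpose, Matrix.mul_assoc,
      ← Matrix.mul_assoc (diagonal a), diagonal_mul_diagonal, hab, hX, Matrix.mul_assoc]
  · rw [inv_diagonal_of_ne_zero fun i => (hw_pos i).ne', padCols_mul_diagonal, Matrix.mul_assoc, diagonal_mul_diagonal,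
      logNorm_padCols_mul_diagonal ε 1 hsr hU, logNorm_padCols_mul_diagonal ε 1 hsr hV,
      haw, hbb, padVec_div_castLE]
    simp only [Real.rpow_one, Real.sqrt_eq_rpow]
    rw [← two_mul, one_div, inv_mul_cancel_left₀ two_ne_zero]
    rfl

/-- With `Ã = [U Σ_X^{1/2} W_X^{1/2}, 0]` and `B̃ = [V Σ_X^{1/2} W_X^{-1/2}, 0]`,
one has `Ã B̃ᵀ = X` and
`(1/2)(‖Ã W⁻¹‖_L^1 + ‖B̃‖_L^1) = ∑_{i=1}^r log((σᵢ / Wᵢᵢ)^{1/2} + ε)`,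
where `σᵢ = 0` for `i > s`. -/
theorem stmt14 {m n r s : ℕ} (hmr : r ≤ m) (hnr : r ≤ n) (ε : ℝ) (hε : 0 < ε)
    (w : Fin r → ℝ) (hw_pos : ∀ i, 0 < w i) (hw_mono : Antitone w)
    (X : Matrix (Fin m) (Fin n) ℝ) (hrank : X.rank = s) (hsr : s ≤ r)
    (U : Matrix (Fin m) (Fin s) ℝ) (V : Matrix (Fin n) (Fin s) ℝ)
    (hU : Uᵀ * U = 1) (hV : Vᵀ * V = 1)
    (σ : Fin s → ℝ) (hσ_pos : ∀ i, 0 < σ i) (hσ_mono : Antitone σ)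
    (hX : X = U * Matrix.diagonal σ * Vᵀ) :
    (padCols hsr (U * Matrix.diagonal
        (fun k => Real.sqrt (σ k) * Real.sqrt (w (Fin.castLE hsr k)))) *
      (padCols hsr (V * Matrix.diagonal
        (fun k => Real.sqrt (σ k) * (Real.sqrt (w (Fin.castLE hsr k)))⁻¹)))ᵀ = X) ∧
    (1/2) * (logNorm ε 1 (padCols hsr (U * Matrix.diagonal
        (fun k => Real.sqrt (σ k) * Real.sqrt (w (Fin.castLE hsr k)))) *
          (Matrix.diagonal w)⁻¹) +
      logNorm ε 1 (padCols hsr (V * Matrix.diagonal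
        (fun k => Real.sqrt (σ k) * (Real.sqrt (w (Fin.castLE hsr k)))⁻¹)))) =
      ∑ i : Fin r, Real.log
        (((if h : (i : ℕ) < s then σ ⟨i, h⟩ else 0) / w i) ^ ((1 : ℝ)/2) + ε) :=
  stmt14_general ε w hw_pos X hsr U V hU hV σ hσ_pos hX
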